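/- Let r, n ≥ 1 be integers, let S = ℂ[[t₁,…,tₙ]], and for i = 1,…,n let Aᵢ ∈ M_r(S) (matrices independent of z). Suppose P ∈ M_r(S[[z]]) satisfies z·∂_{tᵢ}P = Aᵢᵀ·P − P·Aᵢ for all i = 1,…,n, and the evaluation of P at t₁ = ⋯ = tₙ = 0 is a constant matrix P₀ ∈ M_r(ℂ) (independent of z). Then P is the constant matrix P₀; in particular Aᵢᵀ·P₀ = P₀·Aᵢ for all i. -/

import Mathlib

open Matrix

noncomputable section

/-- `S = ℂ[[t₁,…,tₙ]]`. -/
abbrev S (n : ℕ) : Type := MvPowerSeries (Fin n) ℂ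

/-- `S[[z]] = ℂ[[t₁,…,tₙ]][[z]]`. -/
abbrev SZ (n : ℕ) : Type := PowerSeries (S n)

/-- Formal partial derivative `∂/∂tᵢ` on `ℂ[[t₁,…,tₙ]]`. -/
def pd {n : ℕ} (i : Fin n) (f : S n) : S n :=
  fun d => ((d i : ℂ) + 1) * MvPowerSeries.coeff (d + Finsupp.single i 1) f

/-- Formal partial derivative `∂/∂tᵢ` on `S[[z]]`, acting coefficientwise. -/
def pdZ {n : ℕ} (i : Fin n) (f : SZ n) : SZ n :=
  PowerSeries.mk fun k => pd i (PowerSeries.coeff k f)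

/-- Entrywise formal partial derivative `∂/∂tᵢ` on matrices over `S[[z]]`. -/
def pdM {n r : ℕ} (i : Fin n) (X : Matrix (Fin r) (Fin r) (SZ n)) :
    Matrix (Fin r) (Fin r) (SZ n) := X.map (pdZ i)

/-- The inclusion `S → S[[z]]` of `z`-independent series. -/
def liftS {n : ℕ} : S n →+* SZ n := (PowerSeries.C : S n →+* SZ n)

/-- Evaluation at `t₁ = ⋯ = tₙ = 0`, i.e. the map `S[[z]] → ℂ[[z]]`. -/
def evalT {n : ℕ} : SZ n →+* PowerSeries ℂ :=
  PowerSeries.map (MvPowerSeries.constantCoeff : MvPowerSeries (Fin n) ℂ →+* ℂ)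

/-- Complex constants in `S[[z]]`. -/
def constS {n : ℕ} : ℂ →+* SZ n := liftS.comp (MvPowerSeries.C : ℂ →+* MvPowerSeries (Fin n) ℂ)

/-- **Inductive claim in the proof of Theorem 5.1(b) of David–Hertling.** If
`Aᵢ ∈ M_r(ℂ[[t₁,…,tₙ]])` are `z`-independent matrices and `P ∈ M_r(S[[z]])` satisfies the
pairing flatness equations `z∂ᵢP = AᵢᵀP − PAᵢ` and evaluates at `t = 0` to a constant
(z-independent) matrix `P₀ ∈ M_r(ℂ)`, then `P` is the constant matrix `P₀`; in particular
`AᵢᵀP₀ = P₀Aᵢ`. -/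
theorem pairing_rigidity (r n : ℕ) (hr : 1 ≤ r) (hn : 1 ≤ n)
    (A : Fin n → Matrix (Fin r) (Fin r) (S n))
    (P : Matrix (Fin r) (Fin r) (SZ n)) (P₀ : Matrix (Fin r) (Fin r) ℂ)
    (hP : ∀ i : Fin n,
      (PowerSeries.X : SZ n) • pdM i P
        = ((A i).map liftS)ᵀ * P - P * (A i).map liftS)
    (h0 : P.map evalT = P₀.map (PowerSeries.C : ℂ →+* PowerSeries ℂ)) :
    P = P₀.map constS ∧
    ∀ i : Fin n,
      (A i)ᵀ * P₀.map (MvPowerSeries.C : ℂ →+* MvPowerSeries (Fin n) ℂ)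
        = P₀.map (MvPowerSeries.C : ℂ →+* MvPowerSeries (Fin n) ℂ) * A i := by
  classical
  set Q : ℕ → Matrix (Fin r) (Fin r) (S n) :=
    fun k => P.map (PowerSeries.coeff k) with hQdef
  let deg : (Fin n →₀ ℕ) → ℕ := fun d => ∑ j : Fin n, d j
  have hdeg_add : ∀ x y : Fin n →₀ ℕ, deg (x + y) = deg x + deg y := by
    intro x y
    simp [deg, Finsupp.add_apply, Finset.sum_add_distrib]
  -- coefficient of products
  have hL : ∀ (i : Fin n) (k : ℕ) (a b : Fin r),
      PowerSeries.coeff k (((((A i).map liftS)ᵀ) * P) a b)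
        = ((A i)ᵀ * Q k) a b := by
    intro i k a b
    simp [Matrix.mul_apply, Matrix.transpose_apply, Matrix.map_apply, liftS,
      PowerSeries.coeff_C_mul, map_sum, hQdef]
  have hR : ∀ (i : Fin n) (k : ℕ) (a b : Fin r),
      PowerSeries.coeff k ((P * (A i).map liftS) a b)
        = (Q k * A i) a b := by
    intro i k a b
    simp [Matrix.mul_apply, Matrix.map_apply, liftS,
      PowerSeries.coeff_mul_C, map_sum, hQdef]
  -- z-coefficient k+1 of the flatness equation
  have hEk : ∀ (i : Fin n) (k : ℕ) (a b : Fin r),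
      pd i (Q k a b) = ((A i)ᵀ * Q (k + 1)) a b - (Q (k + 1) * A i) a b := by
    intro i k a b
    have h := congrArg (fun M : Matrix (Fin r) (Fin r) (SZ n) =>
      PowerSeries.coeff (k + 1) (M a b)) (hP i)
    simp only [Matrix.smul_apply, smul_eq_mul, PowerSeries.coeff_succ_X_mul,
      Matrix.sub_apply, map_sub, pdM, Matrix.map_apply, pdZ, PowerSeries.coeff_mk] at h
    rw [hL, hR] at h
    exact h
  -- z-coefficient 0
  have hE0 : ∀ i : Fin n, (A i)ᵀ * Q 0 = Q 0 * A i := by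
    intro i
    have h : ∀ a b : Fin r, 0 = ((A i)ᵀ * Q 0) a b - (Q 0 * A i) a b := by
      intro a b
      have h := congrArg (fun M : Matrix (Fin r) (Fin r) (SZ n) =>
        PowerSeries.coeff 0 (M a b)) (hP i)
      simp only [Matrix.smul_apply, smul_eq_mul, PowerSeries.coeff_zero_X_mul,
        Matrix.sub_apply, map_sub] at h
      rw [h, hL, hR]
    exact Matrix.ext fun a b => sub_eq_zero.mp (h a b).symm
  -- evaluation at t = 0
  have h0k : ∀ (k : ℕ) (a b : Fin r),
      MvPowerSeries.coeff 0 (Q k a b) = if k = 0 then P₀ a b else 0 := by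
    intro k a b
    have h := congrArg (fun M : Matrix (Fin r) (Fin r) (PowerSeries ℂ) =>
      PowerSeries.coeff k (M a b)) h0
    simp only [Matrix.map_apply, evalT, PowerSeries.coeff_map, PowerSeries.coeff_C] at h
    rw [MvPowerSeries.coeff_zero_eq_constantCoeff_apply]
    exact h
  -- coefficient of pd
  have hpdc : ∀ (f : S n) (i : Fin n) (d : Fin n →₀ ℕ),
      MvPowerSeries.coeff d (pd i f)
        = ((d i : ℂ) + 1) * MvPowerSeries.coeff (d + Finsupp.single i 1) f :=
    fun _ _ _ => rfl
  have hinv : ∀ (f : S n) (i : Fin n) (d : Fin n →₀ ℕ),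
      MvPowerSeries.coeff d (pd i f) = 0 →
      MvPowerSeries.coeff (d + Finsupp.single i 1) f = 0 := by
    intro f i d h
    rw [hpdc] at h
    have hne : ((d i : ℂ) + 1) ≠ 0 := Nat.cast_add_one_ne_zero _
    exact (mul_eq_zero.mp h).resolve_left hne
  -- main induction: all z-coefficients of positive index vanish
  have main : ∀ (m : ℕ) (d : Fin n →₀ ℕ), deg d = m → ∀ (k : ℕ) (a b : Fin r),
      MvPowerSeries.coeff d (Q (k + 1) a b) = 0 := by
    intro m
    induction m using Nat.strong_induction_on with
    | _ m IH =>
      intro d hd k a b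
      by_cases hd0 : d = 0
      · subst hd0
        simpa using h0k (k + 1) a b
      · obtain ⟨i, hi⟩ : ∃ i, d i ≠ 0 := by
          by_contra hc
          push_neg at hc
          exact hd0 (Finsupp.ext fun j => hc j)
        set d' : Fin n →₀ ℕ := d - Finsupp.single i 1 with hd'def
        have hdd : d' + Finsupp.single i 1 = d := by
          ext j
          by_cases hji : j = i
          · subst hji
            simp only [Finsupp.add_apply, hd'def, Finsupp.tsub_apply, Finsupp.single_apply,
              eq_self_iff_true, if_true]
            omega
          · simp only [Finsupp.add_apply, hd'def, Finsupp.tsub_apply, Finsupp.single_apply,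
              if_neg (Ne.symm hji)]
            omega
        have hlt : deg d' < m := by
          have h1 : deg d' + deg (Finsupp.single i 1) = m := by rw [← hdeg_add, hdd, hd]
          have h2 : deg (Finsupp.single i 1) = 1 := by
            simp [deg, Finsupp.single_apply]
          omega
        have hz : ∀ (e : Fin n →₀ ℕ), deg e ≤ deg d' → ∀ (k' : ℕ) (a' b' : Fin r),
            MvPowerSeries.coeff e (Q (k' + 1) a' b') = 0 := fun e he k' a' b' =>
          IH (deg e) (lt_of_le_of_lt he hlt) e rfl k' a' b'
        have h3 : MvPowerSeries.coeff d' (pd i (Q (k + 1) a b)) = 0 := by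
          rw [hEk i (k + 1) a b, map_sub]
          have hA : MvPowerSeries.coeff d' (((A i)ᵀ * Q (k + 2)) a b) = 0 := by
            rw [Matrix.mul_apply, map_sum]
            apply Finset.sum_eq_zero
            intro c _
            rw [MvPowerSeries.coeff_mul]
            apply Finset.sum_eq_zero
            intro p hp
            have hpsum := Finset.HasAntidiagonal.mem_antidiagonal.mp hp
            have : deg p.2 ≤ deg d' := by
              have := hdeg_add p.1 p.2
              rw [hpsum] at this
              omega
            rw [hz p.2 this (k + 1) c b, mul_zero]
          have hB : MvPowerSeries.coeff d' ((Q (k + 2) * A i) a b) = 0 := by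
            rw [Matrix.mul_apply, map_sum]
            apply Finset.sum_eq_zero
            intro c _
            rw [MvPowerSeries.coeff_mul]
            apply Finset.sum_eq_zero
            intro p hp
            have hpsum := Finset.HasAntidiagonal.mem_antidiagonal.mp hp
            have : deg p.1 ≤ deg d' := by
              have := hdeg_add p.1 p.2
              rw [hpsum] at this
              omega
            rw [hz p.1 this (k + 1) a c, zero_mul]
          rw [hA, hB, sub_zero]
        have := hinv _ i d' h3
        rwa [hdd] at this
  -- Q (k+1) = 0
  have hk1 : ∀ k : ℕ, Q (k + 1) = 0 := by
    intro k
    refine Matrix.ext fun a b => MvPowerSeries.ext fun d => ?_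
    rw [main (deg d) d rfl k a b]
    simp
  -- pd of Q 0 vanishes
  have hpd0 : ∀ (i : Fin n) (a b : Fin r), pd i (Q 0 a b) = 0 := by
    intro i a b
    rw [hEk i 0 a b, hk1 0]
    simp
  -- Q 0 is the constant matrix P₀
  have hQ0 : Q 0 = P₀.map ((MvPowerSeries.C : ℂ →+* MvPowerSeries (Fin n) ℂ)) := by
    refine Matrix.ext fun a b => MvPowerSeries.ext fun d => ?_
    rw [Matrix.map_apply, MvPowerSeries.coeff_C]
    by_cases hd0 : d = 0
    · subst hd0
      rw [if_pos rfl]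
      simpa using h0k 0 a b
    · rw [if_neg hd0]
      obtain ⟨i, hi⟩ : ∃ i, d i ≠ 0 := by
        by_contra hc
        push_neg at hc
        exact hd0 (Finsupp.ext fun j => hc j)
      set d' : Fin n →₀ ℕ := d - Finsupp.single i 1 with hd'def
      have hdd : d' + Finsupp.single i 1 = d := by
        ext j
        by_cases hji : j = i
        · subst hji
          simp only [Finsupp.add_apply, hd'def, Finsupp.tsub_apply, Finsupp.single_apply,
            eq_self_iff_true, if_true]
          omega
        · simp only [Finsupp.add_apply, hd'def, Finsupp.tsub_apply, Finsupp.single_apply,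
            if_neg (Ne.symm hji)]
          omega
      have h3 : MvPowerSeries.coeff d' (pd i (Q 0 a b)) = 0 := by
        rw [hpd0 i a b]
        simp
      have := hinv _ i d' h3
      rwa [hdd] at this
  constructor
  · refine Matrix.ext fun a b => PowerSeries.ext fun k => ?_
    have hconst : ((P₀.map constS) a b) = (PowerSeries.C : S n →+* SZ n) ((MvPowerSeries.C : ℂ →+* MvPowerSeries (Fin n) ℂ) (P₀ a b)) := rfl
    rw [hconst, PowerSeries.coeff_C]
    cases k with
    | zero =>
      rw [if_pos rfl]
      have := congrArg (fun M : Matrix (Fin r) (Fin r) (S n) => M a b) hQ0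
      simpa [hQdef, Matrix.map_apply] using this
    | succ k =>
      rw [if_neg (Nat.succ_ne_zero k)]
      have := congrArg (fun M : Matrix (Fin r) (Fin r) (S n) => M a b) (hk1 k)
      simpa [hQdef, Matrix.map_apply] using this
  · intro i
    have := hE0 i
    rwa [hQ0] at this

end
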